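/- Let k ∈ (0,2π) with k ≠ π, and define g_k(x,y) := 2 + (x−2)cos k − sin k·√(x(4−x))·(2y−1) for x ∈ [0,4] and y ∈ {0,1}. Then for every E ∈ [0,4] with E ≠ 2−2cos(k/2) and E ≠ 2+2cos(k/2), there exists ε > 0 such that for all x ∈ [0,4] with |x − E| < ε and all y ∈ {0,1}, one has |g_k(x,y) − E| ≥ ε. -/
import Mathlib

noncomputable section

/-- g_k(x,y) := 2 + (x−2)cos k − sin k·√(x(4−x))·(2y−1). -/
def gWvN (k x y : ℝ) : ℝ :=
  2 + (x - 2) * Real.cos k - Real.sin k * Real.sqrt (x * (4 - x)) * (2 * y - 1)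

lemma gWvN_cont (k y : ℝ) : Continuous (fun x => gWvN k x y) := by
  unfold gWvN; fun_prop

lemma cos_ne_one_aux (k : ℝ) (hk0 : 0 < k) (hk2 : k < 2 * Real.pi) : Real.cos k ≠ 1 := by
  intro h
  obtain ⟨n, hn⟩ := (Real.cos_eq_one_iff k).mp h
  have hpi := Real.pi_pos
  have h1 : (0:ℝ) < n * (2 * Real.pi) := by rw [hn]; exact hk0
  have h2 : (n:ℝ) * (2 * Real.pi) < 1 * (2 * Real.pi) := by rw [hn]; linarith
  rcases lt_or_ge (n:ℝ) 1 with hl | hl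
  · have hn0 : n ≤ 0 := by
      have : n < 1 := by exact_mod_cast hl
      omega
    have hn0' : (n:ℝ) ≤ 0 := by exact_mod_cast hn0
    nlinarith
  · nlinarith

lemma gWvN_fixed_ne (k : ℝ) (hk0 : 0 < k) (hk2 : k < 2 * Real.pi)
    (E : ℝ) (hE : E ∈ Set.Icc (0:ℝ) 4)
    (hEm : E ≠ 2 - 2 * Real.cos (k / 2)) (hEp : E ≠ 2 + 2 * Real.cos (k / 2))
    (y : ℝ) (hy : y = 0 ∨ y = 1) : gWvN k E y ≠ E := by
  intro h
  have hprod : 0 ≤ E * (4 - E) := mul_nonneg hE.1 (by linarith [hE.2])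
  have hS : Real.sqrt (E * (4 - E)) ^ 2 = E * (4 - E) := Real.sq_sqrt hprod
  have hsig : (2*y - 1)^2 = 1 := by rcases hy with h'|h' <;> subst h' <;> ring
  have heq : Real.sin k * Real.sqrt (E*(4-E)) * (2*y-1) = (E - 2) * (Real.cos k - 1) := by
    unfold gWvN at h; linear_combination -h
  have h2 : (Real.sin k * Real.sqrt (E*(4-E)) * (2*y-1))^2 = ((E-2)*(Real.cos k-1))^2 := by
    rw [heq]
  have hsq : Real.sin k ^2 * (E*(4-E)) = (E-2)^2 * (Real.cos k - 1)^2 := by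
    linear_combination h2 - Real.sin k^2*(2*y-1)^2*hS - Real.sin k^2*(E*(4-E))*hsig
  have hc1 : Real.cos k ≠ 1 := cos_ne_one_aux k hk0 hk2
  have hc : (1 - Real.cos k) ≠ 0 := sub_ne_zero.mpr (Ne.symm hc1)
  have hpy := Real.sin_sq_add_cos_sq k
  have h3 : (1 + Real.cos k) * (E*(4-E)) = (E-2)^2 * (1 - Real.cos k) := by
    apply mul_left_cancel₀ hc
    linear_combination hsq - (E*(4-E))*hpy
  have hhalf : Real.cos k = 2 * Real.cos (k/2)^2 - 1 := by
    have := Real.cos_sq (k/2)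
    rw [show 2 * (k/2) = k by ring] at this
    linarith
  rw [hhalf] at h3
  have ht : (E-2)^2 = 4 * Real.cos (k/2)^2 := by linear_combination -h3/2
  have hz : (E - (2 - 2*Real.cos (k/2))) * (E - (2 + 2*Real.cos (k/2))) = 0 := by
    linear_combination ht
  rcases mul_eq_zero.mp hz with hz | hz
  · exact hEm (sub_eq_zero.mp hz)
  · exact hEp (sub_eq_zero.mp hz)

/-- For k ∈ (0,2π), k ≠ π, and every E ∈ [0,4] different from the thresholds
2 ∓ 2cos(k/2), there is ε > 0 such that |g_k(x,y) − E| ≥ ε for all x ∈ [0,4] with |x−E| < ε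
and all y ∈ {0,1}. -/
theorem gWvN_separation (k : ℝ) (hk0 : 0 < k) (hk2 : k < 2 * Real.pi) (hkpi : k ≠ Real.pi)
    (E : ℝ) (hE : E ∈ Set.Icc (0 : ℝ) 4)
    (hEm : E ≠ 2 - 2 * Real.cos (k / 2)) (hEp : E ≠ 2 + 2 * Real.cos (k / 2)) :
    ∃ ε > 0, ∀ x ∈ Set.Icc (0 : ℝ) 4, |x - E| < ε →
      ∀ y ∈ ({0, 1} : Set ℝ), |gWvN k x y - E| ≥ ε := by
  have key : ∀ y : ℝ, y = 0 ∨ y = 1 → ∃ ε > 0, ∀ x ∈ Set.Icc (0:ℝ) 4, |x - E| < ε →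
      |gWvN k x y - E| ≥ ε := by
    intro y hy
    have hne := gWvN_fixed_ne k hk0 hk2 E hE hEm hEp y hy
    have hm0 : 0 < |gWvN k E y - E| := abs_pos.mpr (sub_ne_zero.mpr hne)
    set m := |gWvN k E y - E| with hm
    have hcont : ContinuousAt (fun x => gWvN k x y) E := (gWvN_cont k y).continuousAt
    rw [Metric.continuousAt_iff] at hcont
    obtain ⟨δ, hδ0, hδ⟩ := hcont (m/2) (by linarith)
    refine ⟨min δ (m/2), lt_min hδ0 (by linarith), ?_⟩
    intro x hx hxE
    have h1 : dist x E < δ := by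
      rw [Real.dist_eq]; exact lt_of_lt_of_le hxE (min_le_left _ _)
    have h2 := hδ h1
    rw [Real.dist_eq] at h2
    have htri : |gWvN k E y - E| ≤ |gWvN k E y - gWvN k x y| + |gWvN k x y - E| :=
      abs_sub_le _ _ _
    rw [abs_sub_comm (gWvN k E y) (gWvN k x y)] at htri
    have : m/2 ≤ |gWvN k x y - E| := by linarith
    exact le_trans (min_le_right _ _) this
  obtain ⟨ε0, hε00, h0⟩ := key 0 (Or.inl rfl)
  obtain ⟨ε1, hε10, h1⟩ := key 1 (Or.inr rfl)
  refine ⟨min ε0 ε1, lt_min hε00 hε10, ?_⟩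
  intro x hx hxE y hy
  simp only [Set.mem_insert_iff, Set.mem_singleton_iff] at hy
  rcases hy with rfl | rfl
  · exact le_trans (min_le_left _ _) (h0 x hx (lt_of_lt_of_le hxE (min_le_left _ _)))
  · exact le_trans (min_le_right _ _) (h1 x hx (lt_of_lt_of_le hxE (min_le_right _ _)))
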